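/- arXiv:1504.03868 — 3 statements merged into one kernel-verified Lean document; each statement's English description precedes it below -/
import Mathlib

section
/- Carlson's theorem: Let f be holomorphic on an open subset of ℂ containing the closed right half-plane {z ∈ ℂ : Re z ≥ 0}, and suppose there exist constants C > 0 and 0 ≤ c < π such that |f(z)| ≤ C·e^{c|z|} for all z with Re z ≥ 0. If f(n) = 0 for every nonnegative integer n, then f(z) = 0 for all z with Re z > 0. -/
/-!
Since `f` vanishes at the nonnegative integers, `q = f / sin (π z)` is holomorphic on the open
right half-plane. On `Re z ≥ 1/2` it is still of exponential type: away from the integers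
`|sin (π z)| ≥ 2 dist(z, ℤ)`, and near an integer the maximum modulus principle applies on a disc
that stays inside the closed half-plane. On the line `Re z = 1/2` we have
`|sin (π z)| = cosh (π Im z)`, so there `q` decays like `e^{-(π - c)|Im z|}`. Multiplying
`q (w + 1/2)` by `e^{-ε (w + 1) log (w + 1)}`, which grows at most like `e^{ε π |Im w| / 2}` but
decays superexponentially along the real axis, with `ε π / 2 = π - c`, the Phragmén–Lindelöf
principle forces `q` to vanish on `Re z ≥ 1/2`. The identity theorem spreads `f = 0` to the open
half-plane.
-/

open Complex Filter Topology Asymptotics Metric Set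
open scoped Real

lemma Complex.norm_sin_sq (z : ℂ) :
    ‖sin z‖ ^ 2 = Real.sin z.re ^ 2 + Real.sinh z.im ^ 2 := by
  have h : sin z =
      (Real.sin z.re * Real.cosh z.im : ℝ) + (Real.cos z.re * Real.sinh z.im : ℝ) * I := by
    rw [sin_eq]; push_cast; ring
  rw [h, Complex.sq_norm, normSq_add_mul_I]
  nlinarith [Real.sin_sq_add_cos_sq z.re, Real.cosh_sq z.im]

lemma two_mul_le_norm_sin_pi_mul {z : ℂ} {r : ℝ} (h : ∀ k : ℤ, r ≤ ‖z - k‖) :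
    2 * r ≤ ‖sin (π * z)‖ := by
  set k := round z.re
  set t := z.re - k
  have hre : Real.sin (π * z.re) ^ 2 = Real.sin (π * t) ^ 2 := by
    rw [show π * z.re = π * t + k * π by simp only [t]; ring, Real.sin_add_int_mul_pi, mul_pow,
      ← sq_abs ((-1 : ℝ) ^ k), abs_neg_one_zpow, one_pow, one_mul]
  have hjordan : (2 * t) ^ 2 ≤ Real.sin (π * t) ^ 2 := by
    have hπt : |π * t| ≤ π / 2 := by
      rw [abs_mul, abs_of_pos Real.pi_pos]
      nlinarith [abs_sub_round z.re, Real.pi_pos]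
    have := Real.mul_abs_le_abs_sin hπt
    rw [abs_mul, abs_of_pos Real.pi_pos, ← mul_assoc, div_mul_cancel₀ _ Real.pi_ne_zero] at this
    rw [← sq_abs, ← sq_abs (Real.sin _), abs_mul, abs_two]
    gcongr
  have hsinh : (π * z.im) ^ 2 ≤ Real.sinh (π * z.im) ^ 2 := by
    rw [← sq_abs, ← sq_abs (Real.sinh _), Real.abs_sinh]
    gcongr; exact Real.self_le_sinh_iff.2 (abs_nonneg _)
  have hdist : ‖z - k‖ ^ 2 = t ^ 2 + z.im ^ 2 := by
    rw [Complex.sq_norm, normSq_apply]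
    simp only [sub_re, intCast_re, sub_im, intCast_im, sub_zero, t]
    ring
  have hnorm : ‖sin (π * z)‖ ^ 2 = Real.sin (π * z.re) ^ 2 + Real.sinh (π * z.im) ^ 2 := by
    rw [Complex.norm_sin_sq]; simp
  have hπ : 4 * z.im ^ 2 ≤ (π * z.im) ^ 2 := by
    rw [mul_pow]; gcongr; nlinarith [Real.pi_gt_three]
  calc 2 * r ≤ 2 * ‖z - k‖ := by linarith [h k]
    _ ≤ ‖sin (π * z)‖ := by
      refine (pow_le_pow_iff_left₀ (by positivity) (norm_nonneg _) two_ne_zero).1 ?_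
      nlinarith

lemma exp_pi_mul_abs_div_two_le_norm_sin_pi_mul_add_half (y : ℝ) :
    Real.exp (π * |y|) / 2 ≤ ‖sin (π * (y * I + 1 / 2))‖ := by
  have h : sin (π * (y * I + 1 / 2)) = (Real.cosh (π * y) : ℝ) := by
    rw [show (π : ℂ) * (y * I + 1 / 2) = (π * y : ℝ) * I + π / 2 by push_cast; ring,
      sin_add_pi_div_two, cos_mul_I, ofReal_cosh]
  rw [h, Complex.norm_real, Real.norm_of_nonneg (Real.cosh_pos _).le, ← Real.cosh_abs, abs_mul,
    abs_of_pos Real.pi_pos, Real.cosh_eq]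
  linarith [Real.exp_pos (-(π * |y|))]

lemma sin_pi_mul_eq_zero_iff {z : ℂ} : sin (π * z) = 0 ↔ ∃ k : ℤ, z = k := by
  rw [sin_eq_zero_iff]
  refine exists_congr fun k => ?_
  rw [mul_comm (k : ℂ), mul_right_inj' (ofReal_ne_zero.2 Real.pi_ne_zero)]

lemma hasDerivAt_sin_pi_mul (z : ℂ) :
    HasDerivAt (fun w => sin (π * w)) (π * cos (π * z)) z := by
  have := (hasDerivAt_sin (π * z)).comp z ((hasDerivAt_id z).const_mul (π : ℂ))
  rwa [mul_one, mul_comm] at this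

lemma deriv_sin_pi_mul_ne_zero {z : ℂ} (h : sin (π * z) = 0) :
    deriv (fun w => sin (π * w)) z ≠ 0 := by
  rw [(hasDerivAt_sin_pi_mul z).deriv]
  refine mul_ne_zero (ofReal_ne_zero.2 Real.pi_ne_zero) fun hcos => ?_
  simpa [h, hcos] using sin_sq_add_cos_sq (π * z)

lemma le_norm_sub_intCast_of_norm_sub_lt {z w : ℂ} {k : ℤ} (hk : ‖z - k‖ < 1 / 8)
    (hw : ‖w - z‖ = 3 / 8) (j : ℤ) : 1 / 4 ≤ ‖w - j‖ := by
  rcases eq_or_ne j k with rfl | hjk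
  · linarith [norm_sub_le_norm_sub_add_norm_sub w j z, norm_sub_rev (j : ℂ) z]
  · have : (1 : ℝ) ≤ ‖(k : ℂ) - j‖ := by
      rw [← Int.cast_sub, norm_intCast]; exact_mod_cast Int.one_le_abs (sub_ne_zero.2 hjk.symm)
    linarith [norm_sub_le_norm_sub_add_norm_sub (k : ℂ) w j,
      norm_sub_le_norm_sub_add_norm_sub (k : ℂ) z w, norm_sub_rev (k : ℂ) z, norm_sub_rev z w]

section RemovableDiv

variable {f g : ℂ → ℂ}

/-- `f / g`, with the value `f' / g'` at the zeros of `g`: at a simple zero of `g` where `f`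
vanishes this is the limit of `f / g`, so the removable singularity is filled in. -/
noncomputable def removableDiv (f g : ℂ → ℂ) (z : ℂ) : ℂ :=
  if g z = 0 then deriv f z / deriv g z else f z / g z

lemma removableDiv_of_ne_zero {z : ℂ} (h : g z ≠ 0) :
    removableDiv f g z = f z / g z := if_neg h

lemma removableDiv_mul_cancel {z : ℂ} (h : g z = 0 → f z = 0) :
    removableDiv f g z * g z = f z := by
  by_cases hz : g z = 0
  · simp [hz, h hz]
  · rw [removableDiv_of_ne_zero hz, div_mul_cancel₀ _ hz]

lemma differentiableAt_removableDiv {V : Set ℂ} {a : ℂ} (hV : V ∈ 𝓝 a)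
    (hf : DifferentiableOn ℂ f V) (hg : DifferentiableOn ℂ g V) (hfg : g a = 0 → f a = 0)
    (hg' : g a = 0 → deriv g a ≠ 0) : DifferentiableAt ℂ (removableDiv f g) a := by
  by_cases ha : g a = 0
  · have hF := ((Complex.differentiableOn_dslope hV).2 hf).differentiableAt hV
    have hG := ((Complex.differentiableOn_dslope hV).2 hg).differentiableAt hV
    have hGa : dslope g a a ≠ 0 := by rw [dslope_same]; exact hg' ha
    refine (hF.div hG hGa).congr_of_eventuallyEq ?_
    filter_upwards [hG.continuousAt.eventually_ne hGa] with z hz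
    rcases eq_or_ne z a with rfl | hza
    · simp [removableDiv, ha]
    · have hsub : z - a ≠ 0 := sub_ne_zero.2 hza
      have hgz : g z = (z - a) * dslope g a z := by
        rw [← smul_eq_mul, sub_smul_dslope, ha, sub_zero]
      have hfz : f z = (z - a) * dslope f a z := by
        rw [← smul_eq_mul, sub_smul_dslope, hfg ha, sub_zero]
      rw [removableDiv_of_ne_zero (by rw [hgz]; exact mul_ne_zero hsub hz), hfz, hgz,
        mul_div_mul_left _ _ hsub, Pi.div_apply]
  · have hfa := hf.differentiableAt hV
    have hga := hg.differentiableAt hV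
    refine (hfa.div hga ha).congr_of_eventuallyEq ?_
    filter_upwards [hga.continuousAt.eventually_ne ha] with z hz
    exact removableDiv_of_ne_zero hz

end RemovableDiv

noncomputable def decayWeight (ε : ℝ) (w : ℂ) : ℂ := exp (-(ε * ((w + 1) * log (w + 1))))

lemma differentiableAt_decayWeight (ε : ℝ) {w : ℂ} (hw : 0 ≤ w.re) :
    DifferentiableAt ℂ (decayWeight ε) w := by
  have hslit : w + 1 ∈ slitPlane := by
    rw [mem_slitPlane_iff, add_re, one_re]; left; linarith
  unfold decayWeight
  fun_prop (disch := exact hslit)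

lemma norm_decayWeight_le {ε : ℝ} (hε : 0 ≤ ε) {w : ℂ} (hw : 0 ≤ w.re) :
    ‖decayWeight ε w‖ ≤ Real.exp (ε * (π / 2) * |w.im|) := by
  set u := w + 1
  have hu : 1 ≤ u.re := by simpa [u] using hw
  have hlog : 0 ≤ Real.log ‖u‖ := Real.log_nonneg (hu.trans (re_le_norm u))
  have harg : u.im * arg u ≤ π / 2 * |w.im| := by
    have := abs_arg_le_pi_div_two_iff.2 (zero_le_one.trans hu)
    calc u.im * arg u ≤ |u.im| * |arg u| := by rw [← abs_mul]; exact le_abs_self _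
      _ ≤ |w.im| * (π / 2) := by simp only [u, add_im, one_im, add_zero]; gcongr
      _ = π / 2 * |w.im| := mul_comm _ _
  rw [decayWeight, norm_exp, Real.exp_le_exp]
  simp only [neg_re, mul_re, ofReal_re, ofReal_im, log_re, log_im, zero_mul, sub_zero]
  nlinarith [mul_nonneg (mul_nonneg hε (zero_le_one.trans hu)) hlog,
    mul_le_mul_of_nonneg_left harg hε]

lemma norm_decayWeight_ofReal (ε : ℝ) {x : ℝ} (hx : 0 ≤ x) :
    ‖decayWeight ε x‖ = Real.exp (-(ε * ((x + 1) * Real.log (x + 1)))) := by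
  rw [decayWeight, ← ofReal_one, ← ofReal_add, ← ofReal_log (by linarith), ← ofReal_mul,
    ← ofReal_mul, ← ofReal_neg, ← ofReal_exp, norm_real,
    Real.norm_of_nonneg (Real.exp_pos _).le]

lemma superpolynomialDecay_exp_mul_sub_mul_log {ε : ℝ} (hε : 0 < ε) (K : ℝ) :
    SuperpolynomialDecay atTop Real.exp
      fun x => Real.exp (K * x - ε * ((x + 1) * Real.log (x + 1))) := by
  intro n
  have hlin : Tendsto (fun x : ℝ => x + 1) atTop atTop :=
    tendsto_atTop_add_const_right _ 1 tendsto_id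
  have hexponent : Tendsto (fun x : ℝ => (x + 1) * (n + K + -(ε * Real.log (x + 1))) - (n + K))
      atTop atBot := by
    refine tendsto_atBot_add_const_right _ _ (hlin.atTop_mul_atBot₀ ?_)
    exact tendsto_atBot_add_const_left _ _ (tendsto_neg_atTop_atBot.comp
      ((Real.tendsto_log_atTop.comp hlin).const_mul_atTop hε))
  refine (Real.tendsto_exp_atBot.comp hexponent).congr fun x => ?_
  rw [Function.comp_apply, ← Real.exp_nat_mul, ← Real.exp_add]
  ring_nf

lemma DiffContOnCl.mul_decayWeight {q : ℂ → ℂ} (hd : DiffContOnCl ℂ q {z | 0 < z.re})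
    (ε : ℝ) :
    DiffContOnCl ℂ (fun z => q z * decayWeight ε z) {z | 0 < z.re} := by
  have hw : DifferentiableOn ℂ (decayWeight ε) (closure {z | 0 < z.re}) := fun z hz => by
    rw [closure_setOfPred_lt_re] at hz
    exact (differentiableAt_decayWeight ε hz).differentiableWithinAt
  exact ⟨hd.differentiableOn.mul (hw.mono subset_closure), hd.continuousOn.mul hw.continuousOn⟩

theorem eqOn_zero_of_exponential_type_of_decay_on_imaginary_axis {q : ℂ → ℂ} {A B D a : ℝ}
    (hd : DiffContOnCl ℂ q {z | 0 < z.re}) (ha : 0 < a)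
    (hgrowth : ∀ z : ℂ, 0 ≤ z.re → ‖q z‖ ≤ A * Real.exp (B * ‖z‖))
    (him : ∀ y : ℝ, ‖q (y * I)‖ ≤ D * Real.exp (-(a * |y|))) :
    EqOn q 0 {z | 0 ≤ z.re} := by
  set ε := a / (π / 2)
  have hε : 0 < ε := by positivity
  have hεa : ε * (π / 2) = a := div_mul_cancel₀ _ (by positivity)
  have hA : 0 ≤ A := by simpa using (norm_nonneg _).trans (hgrowth 0 le_rfl)
  have hweight : ∀ z : ℂ, 0 ≤ z.re → ‖decayWeight ε z‖ ≤ Real.exp (a * |z.im|) :=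
    fun z hz => hεa ▸ norm_decayWeight_le hε.le hz
  set F : ℂ → ℂ := fun z => q z * decayWeight ε z
  have hFzero := PhragmenLindelof.eq_zero_on_right_half_plane_of_superexponential_decay
    (hd.mul_decayWeight ε)
    ⟨1, one_lt_two, B + a, ?_⟩ ?_ ⟨D, fun y => ?_⟩
  · exact fun z hz => (mul_eq_zero.1 (hFzero hz)).resolve_right (Complex.exp_ne_zero _)
  · refine .of_bound A (eventually_inf_principal.2 (.of_forall fun z (hz : 0 < z.re) => ?_))
    calc ‖F z‖ ≤ A * Real.exp (B * ‖z‖) * Real.exp (a * |z.im|) := by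
          rw [norm_mul]
          exact mul_le_mul (hgrowth z hz.le) (hweight z hz.le) (norm_nonneg _)
            ((norm_nonneg _).trans (hgrowth z hz.le))
      _ ≤ A * ‖Real.exp ((B + a) * ‖z‖ ^ (1 : ℝ))‖ := by
          rw [mul_assoc, ← Real.exp_add, Real.rpow_one, Real.norm_of_nonneg (Real.exp_pos _).le]
          gcongr
          nlinarith [abs_im_le_norm z]
  · have hdecay := (superpolynomialDecay_exp_mul_sub_mul_log hε B).const_mul A
    refine hdecay.trans_eventually_abs_le ?_
    filter_upwards [eventually_ge_atTop 0] with x hx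
    calc |‖F x‖| = ‖q x‖ * Real.exp (-(ε * ((x + 1) * Real.log (x + 1)))) := by
          rw [abs_norm, norm_mul, norm_decayWeight_ofReal ε hx]
      _ ≤ A * Real.exp (B * x) * Real.exp (-(ε * ((x + 1) * Real.log (x + 1)))) := by
          gcongr
          simpa [abs_of_nonneg hx] using hgrowth x (by simpa using hx)
      _ ≤ |A * Real.exp (B * x - ε * ((x + 1) * Real.log (x + 1)))| := by
          rw [mul_assoc, ← Real.exp_add, ← sub_eq_add_neg]; exact le_abs_self _
  · calc ‖F (y * I)‖ ≤ D * Real.exp (-(a * |y|)) * Real.exp (a * |y|) := by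
          rw [norm_mul]
          refine mul_le_mul (him y) ?_ (norm_nonneg _) ((norm_nonneg _).trans (him y))
          simpa using hweight (y * I) (by simp)
      _ = D := by rw [mul_assoc, ← Real.exp_add, neg_add_cancel, Real.exp_zero, mul_one]

section Carlson

variable {f : ℂ → ℂ} {C c : ℝ}

lemma apply_eq_zero_of_sin_pi_mul_eq_zero (hzero : ∀ n : ℕ, f n = 0) {z : ℂ}
    (hz : 0 ≤ z.re) (h : sin (π * z) = 0) : f z = 0 := by
  obtain ⟨k, rfl⟩ := sin_pi_mul_eq_zero_iff.1 h
  lift k to ℕ using by simpa using hz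
  exact_mod_cast hzero k

lemma differentiableAt_removableDiv_sin_pi_mul (hf : DifferentiableOn ℂ f {z | 0 < z.re})
    (hzero : ∀ n : ℕ, f n = 0) {z : ℂ} (hz : 0 < z.re) :
    DifferentiableAt ℂ (removableDiv f fun w => sin (π * w)) z :=
  differentiableAt_removableDiv ((isOpen_lt continuous_const continuous_re).mem_nhds hz) hf
    (fun w _ => (hasDerivAt_sin_pi_mul w).differentiableAt.differentiableWithinAt)
    (apply_eq_zero_of_sin_pi_mul_eq_zero hzero hz.le) deriv_sin_pi_mul_ne_zero

lemma norm_removableDiv_sin_pi_mul_le_of_forall_le_norm_sub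
    (hbound : ∀ z : ℂ, 0 ≤ z.re → ‖f z‖ ≤ C * Real.exp (c * ‖z‖)) {z : ℂ} (hz : 0 ≤ z.re)
    {r : ℝ} (hr : 0 < r) (h : ∀ k : ℤ, r ≤ ‖z - k‖) :
    ‖removableDiv f (fun w => sin (π * w)) z‖ ≤ C * Real.exp (c * ‖z‖) / (2 * r) := by
  have hsin := two_mul_le_norm_sin_pi_mul h
  rw [removableDiv_of_ne_zero (norm_pos_iff.1 (by linarith)), norm_div]
  exact div_le_div₀ ((norm_nonneg _).trans (hbound z hz)) (hbound z hz) (by positivity) hsin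

lemma norm_removableDiv_sin_pi_mul_le_of_norm_sub_lt
    (hf : DifferentiableOn ℂ f {z | 0 < z.re}) (hzero : ∀ n : ℕ, f n = 0) (hC : 0 ≤ C)
    (hc : 0 ≤ c) (hbound : ∀ z : ℂ, 0 ≤ z.re → ‖f z‖ ≤ C * Real.exp (c * ‖z‖)) {z : ℂ}
    (hz : 1 / 2 ≤ z.re) {k : ℤ} (hk : ‖z - k‖ < 1 / 8) :
    ‖removableDiv f (fun w => sin (π * w)) z‖ ≤ 2 * C * Real.exp (c * (‖z‖ + 3 / 8)) := by
  have hre : ∀ w ∈ closedBall z (3 / 8), 1 / 8 ≤ w.re := fun w hw => by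
    rw [mem_closedBall, dist_eq] at hw
    linarith [neg_abs_le (w - z).re, abs_re_le_norm (w - z), sub_re w z]
  have hdiff : DiffContOnCl ℂ (removableDiv f fun w => sin (π * w)) (ball z (3 / 8)) :=
    DifferentiableOn.diffContOnCl fun w hw =>
      (differentiableAt_removableDiv_sin_pi_mul hf hzero
        (by linarith [hre w (closure_ball_subset_closedBall hw)])).differentiableWithinAt
  refine norm_le_of_forall_mem_frontier_norm_le isBounded_ball hdiff (fun w hw => ?_)
    (subset_closure (mem_ball_self (by norm_num)))
  rw [frontier_ball _ (by norm_num)] at hw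
  have hw' : ‖w - z‖ = 3 / 8 := mem_sphere_iff_norm.1 hw
  calc _ ≤ C * Real.exp (c * ‖w‖) / (2 * (1 / 4)) :=
        norm_removableDiv_sin_pi_mul_le_of_forall_le_norm_sub hbound
          (by linarith [hre w (sphere_subset_closedBall hw)]) (by norm_num)
          (le_norm_sub_intCast_of_norm_sub_lt hk hw')
    _ ≤ 2 * C * Real.exp (c * (‖z‖ + 3 / 8)) := by
        rw [div_eq_mul_inv, show (2 * (1 / 4) : ℝ)⁻¹ = 2 by norm_num, mul_comm _ (2 : ℝ),
          ← mul_assoc]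
        gcongr; linarith [norm_le_norm_add_norm_sub' w z]

lemma norm_removableDiv_sin_pi_mul_le
    (hf : DifferentiableOn ℂ f {z | 0 < z.re}) (hzero : ∀ n : ℕ, f n = 0) (hC : 0 ≤ C)
    (hc : 0 ≤ c) (hbound : ∀ z : ℂ, 0 ≤ z.re → ‖f z‖ ≤ C * Real.exp (c * ‖z‖)) {z : ℂ}
    (hz : 1 / 2 ≤ z.re) :
    ‖removableDiv f (fun w => sin (π * w)) z‖ ≤ 4 * C * Real.exp (c * (‖z‖ + 1)) := by
  by_cases! hfar : ∀ k : ℤ, 1 / 8 ≤ ‖z - k‖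
  · calc _ ≤ C * Real.exp (c * ‖z‖) / (2 * (1 / 8)) :=
          norm_removableDiv_sin_pi_mul_le_of_forall_le_norm_sub hbound (by linarith)
            (by norm_num) hfar
      _ ≤ 4 * C * Real.exp (c * (‖z‖ + 1)) := by
          rw [div_eq_mul_inv, show (2 * (1 / 8) : ℝ)⁻¹ = 4 by norm_num, mul_comm _ (4 : ℝ),
            ← mul_assoc]
          gcongr; linarith
  · obtain ⟨k, hk⟩ := hfar
    calc _ ≤ 2 * C * Real.exp (c * (‖z‖ + 3 / 8)) :=
          norm_removableDiv_sin_pi_mul_le_of_norm_sub_lt hf hzero hC hc hbound hz hk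
      _ ≤ 4 * C * Real.exp (c * (‖z‖ + 1)) := by gcongr <;> linarith

lemma norm_removableDiv_sin_pi_mul_add_half_le (hC : 0 ≤ C) (hc : 0 ≤ c)
    (hbound : ∀ z : ℂ, 0 ≤ z.re → ‖f z‖ ≤ C * Real.exp (c * ‖z‖)) (y : ℝ) :
    ‖removableDiv f (fun w => sin (π * w)) (y * I + 1 / 2)‖ ≤
      2 * C * Real.exp (c / 2) * Real.exp (-((π - c) * |y|)) := by
  have hsin := exp_pi_mul_abs_div_two_le_norm_sin_pi_mul_add_half y
  have hw : ‖(y : ℂ) * I + 1 / 2‖ ≤ |y| + 1 / 2 := by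
    refine (norm_add_le _ _).trans_eq ?_; simp
  rw [removableDiv_of_ne_zero (g := fun w => sin (π * w))
    (norm_pos_iff.1 (lt_of_lt_of_le (by positivity) hsin)), norm_div]
  calc _ ≤ C * Real.exp (c * (|y| + 1 / 2)) / (Real.exp (π * |y|) / 2) := by
        refine div_le_div₀ (by positivity) ((hbound _ (by simp)).trans ?_) (by positivity) hsin
        gcongr
    _ = 2 * C * Real.exp (c / 2) * Real.exp (-((π - c) * |y|)) := by
        have : Real.exp (c * (|y| + 1 / 2)) =
            Real.exp (c / 2) * Real.exp (-((π - c) * |y|)) * Real.exp (π * |y|) := by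
          rw [← Real.exp_add, ← Real.exp_add]; ring_nf
        rw [this]; field_simp

lemma eq_zero_of_half_le_re (hf : DifferentiableOn ℂ f {z | 0 < z.re})
    (hzero : ∀ n : ℕ, f n = 0) (hC : 0 ≤ C) (hc : 0 ≤ c) (hcπ : c < π)
    (hbound : ∀ z : ℂ, 0 ≤ z.re → ‖f z‖ ≤ C * Real.exp (c * ‖z‖)) {z : ℂ}
    (hz : 1 / 2 ≤ z.re) : f z = 0 := by
  set q := removableDiv f fun w => sin (π * w)
  have hshift : EqOn (fun w => q (w + 1 / 2)) 0 {w | 0 ≤ w.re} := by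
    refine eqOn_zero_of_exponential_type_of_decay_on_imaginary_axis
      (A := 4 * C * Real.exp (3 / 2 * c)) (B := c) ?_ (sub_pos.2 hcπ) (fun w hw => ?_)
      (norm_removableDiv_sin_pi_mul_add_half_le hC hc hbound)
    · refine DifferentiableOn.diffContOnCl fun w hw => ?_
      rw [closure_setOfPred_lt_re] at hw
      have hq := differentiableAt_removableDiv_sin_pi_mul hf hzero (z := w + 1 / 2)
        (by linarith [hw.out, show (w + 1 / 2).re = w.re + 1 / 2 by norm_num])
      exact (hq.comp w (differentiableAt_id.add_const (1 / 2 : ℂ))).differentiableWithinAt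
    · refine (norm_removableDiv_sin_pi_mul_le hf hzero hC hc hbound
        (by simpa using hw)).trans ?_
      have hw' : ‖w + 1 / 2‖ ≤ ‖w‖ + 1 / 2 := (norm_add_le _ _).trans_eq (by norm_num)
      rw [mul_assoc (4 * C), ← Real.exp_add]
      gcongr
      nlinarith
  have hq : q z = 0 := by
    simpa using hshift (show 0 ≤ (z - 1 / 2).re by
      linarith [show (z - 1 / 2).re = z.re - 1 / 2 by norm_num])
  calc f z = q z * sin (π * z) :=
        (removableDiv_mul_cancel (apply_eq_zero_of_sin_pi_mul_eq_zero hzero (by linarith))).symm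
    _ = 0 := by rw [hq, zero_mul]

end Carlson

theorem carlson_theorem_general (f : ℂ → ℂ) (U : Set ℂ)
    (hUsub : {z : ℂ | 0 ≤ z.re} ⊆ U) (hf : DifferentiableOn ℂ f U)
    (C c : ℝ) (hC : 0 < C) (hc0 : 0 ≤ c) (hcπ : c < Real.pi)
    (hbound : ∀ z : ℂ, 0 ≤ z.re → ‖f z‖ ≤ C * Real.exp (c * ‖z‖))
    (hzero : ∀ n : ℕ, f (n : ℂ) = 0) :
    ∀ z : ℂ, 0 < z.re → f z = 0 := by
  have hopen : IsOpen {z : ℂ | 0 < z.re} := isOpen_lt continuous_const continuous_re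
  have hf' : DifferentiableOn ℂ f {z | 0 < z.re} :=
    hf.mono fun z (hz : 0 < z.re) => hUsub hz.le
  refine (hf'.analyticOnNhd hopen).eqOn_zero_of_preconnected_of_eventuallyEq_zero
    (convex_halfSpace_re_gt 0).isPreconnected (z₀ := 1) (by simp) ?_
  filter_upwards [(isOpen_lt continuous_const continuous_re).mem_nhds
    (show (1 / 2 : ℝ) < (1 : ℂ).re by norm_num)] with w (hw : 1 / 2 < w.re)
  exact eq_zero_of_half_le_re hf' hzero hC.le hc0 hcπ hbound hw.le

/-- **Carlson's theorem.** Let `f` be holomorphic on an open set containing the closed right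
half-plane `{z : 0 ≤ Re z}`, and suppose there are constants `C > 0` and `0 ≤ c < π` with
`|f z| ≤ C * exp (c * |z|)` on the closed right half-plane. If `f` vanishes at every
nonnegative integer, then `f` vanishes on the open right half-plane. -/
theorem carlson_theorem (f : ℂ → ℂ) (U : Set ℂ) (hU : IsOpen U)
    (hUsub : {z : ℂ | 0 ≤ z.re} ⊆ U) (hf : DifferentiableOn ℂ f U)
    (C c : ℝ) (hC : 0 < C) (hc0 : 0 ≤ c) (hcπ : c < Real.pi)
    (hbound : ∀ z : ℂ, 0 ≤ z.re → ‖f z‖ ≤ C * Real.exp (c * ‖z‖))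
    (hzero : ∀ n : ℕ, f (n : ℂ) = 0) :
    ∀ z : ℂ, 0 < z.re → f z = 0 :=
  carlson_theorem_general f U hUsub hf C c hC hc0 hcπ hbound hzero
end

section
/- Let t ∈ A_q, z ∈ 𝕋, and let k_1 = diag(u_1,v_1), k_2 = diag(u_2,v_2) ∈ K_1. Set g := k_1 · b_{t,z} · k_2 ∈ SU(p+q). Then the eigenvalues of D(g)*D(g), counted with multiplicity, are cos²t_1, …, cos²t_q (equivalently, the singular values of D(g) listed in increasing order are cos t_1 ≤ … ≤ cos t_q), and det D(g) = z · ∏_{j=1}^q cos t_j. In particular, if t_1 < π/2 then z = det D(g) / |det D(g)|. -/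
/-! The lower-right block of `k₁ b_{t,z} k₂` is `D = v₁ h(z) cos t̲ v₂`. As `v₁` and `h(z)` are
unitary, `Dᴴ D = v₂ᴴ cos² t̲ v₂` is unitarily similar to a diagonal matrix, so its eigenvalues are
the `cos² tⱼ` up to a permutation, and these are already increasing because `t` decreases in
`[0, π/2]`. Since `det v₁ = det v₂ = 1`, `det D = det h(z) ∏ cos tⱼ = z ∏ cos tⱼ`, and the
product is positive once `t₁ < π/2`. -/

noncomputable section
open Matrix

/-- the alcove `A_q = {t : π/2 ≥ t₁ ≥ … ≥ t_q ≥ 0}` (coordinates `t 0, …, t (q-1)`). -/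
def Aq (q : ℕ) : Set (Fin q → ℝ) :=
  {t | (∀ j, 0 ≤ t j ∧ t j ≤ Real.pi / 2) ∧ (∀ i j : Fin q, i ≤ j → t j ≤ t i)}

/-- `h(z) = diag(z,1,…,1) ∈ M_q(ℂ)` -/
def hMat (q : ℕ) (z : ℂ) : Matrix (Fin q) (Fin q) ℂ :=
  Matrix.diagonal (fun j => if j.val = 0 then z else 1)

def cosMat (q : ℕ) (t : Fin q → ℝ) : Matrix (Fin q) (Fin q) ℂ :=
  Matrix.diagonal (fun j => (Real.cos (t j) : ℂ))

def sinMat (q : ℕ) (t : Fin q → ℝ) : Matrix (Fin q) (Fin q) ℂ :=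
  Matrix.diagonal (fun j => (Real.sin (t j) : ℂ))

/-- index type for `SU(p+q)` with `p = m + q`: blocks of sizes `m, q, q`. -/
abbrev bidx (m q : ℕ) := (Fin m ⊕ Fin q) ⊕ Fin q

/-- the matrix `b_{t,z}` -/
def bMat (m q : ℕ) (t : Fin q → ℝ) (z : ℂ) : Matrix (bidx m q) (bidx m q) ℂ :=
  Matrix.fromBlocks
    (Matrix.fromBlocks 1 0 0 (hMat q z⁻¹ * cosMat q t))
    (Matrix.fromRows 0 (-(sinMat q t)))
    (Matrix.fromCols 0 (sinMat q t))
    (hMat q z * cosMat q t)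

/-- block diagonal embedding `diag(u,v)`. -/
def diagBlock (m q : ℕ) (u : Matrix (Fin m ⊕ Fin q) (Fin m ⊕ Fin q) ℂ)
    (v : Matrix (Fin q) (Fin q) ℂ) : Matrix (bidx m q) (bidx m q) ℂ :=
  Matrix.fromBlocks u 0 0 v

/-- lower-right `q×q` block `D(g)`. -/
def lrBlock (m q : ℕ) (g : Matrix (bidx m q) (bidx m q) ℂ) :
    Matrix (Fin q) (Fin q) ℂ :=
  Matrix.of fun i j => g (Sum.inr i) (Sum.inr j)

/-- increasingly ordered singular values of a complex `q×q` matrix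
(square roots of the eigenvalues of `Xᴴ X`, in increasing order). -/
def sigUp {q : ℕ} (X : Matrix (Fin q) (Fin q) ℂ) : Fin q → ℝ :=
  fun j => Real.sqrt
    (((Matrix.isHermitian_conjTranspose_mul_self X).eigenvalues ∘
      Tuple.sort (Matrix.isHermitian_conjTranspose_mul_self X).eigenvalues) j)

theorem Matrix.charpoly_conjTranspose_mul_mul_of_mem_unitaryGroup {n R : Type*} [Fintype n]
    [DecidableEq n] [CommRing R] [StarRing R] {V : Matrix n n R} (hV : V ∈ unitaryGroup n R)
    (B : Matrix n n R) : (Vᴴ * B * V).charpoly = B.charpoly := by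
  rw [mul_assoc, charpoly_mul_comm, mul_assoc, ← star_eq_conjTranspose,
    mem_unitaryGroup_iff.mp hV, mul_one]

theorem Tuple.comp_sort_eq_of_map_univ_eq {n : ℕ} {α : Type*} [LinearOrder α] {e d : Fin n → α}
    (h : Multiset.map e Finset.univ.val = Multiset.map d Finset.univ.val) :
    e ∘ Tuple.sort e = d ∘ Tuple.sort d := by
  have hperm : (List.ofFn (e ∘ sort e)).Perm (List.ofFn (d ∘ sort d)) := by
    rw [← Multiset.coe_eq_coe, ← Fin.univ_val_map, ← Fin.univ_val_map, ← Multiset.map_map,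
      ← Multiset.map_map, Multiset.map_univ_val_equiv, Multiset.map_univ_val_equiv, h]
  exact List.ofFn_injective <| hperm.eq_of_sortedLE (monotone_sort e).sortedLE_ofFn
    (monotone_sort d).sortedLE_ofFn

theorem Tuple.exists_perm_comp_eq_of_map_univ_eq {n : ℕ} {α : Type*} [LinearOrder α]
    {e d : Fin n → α} (h : Multiset.map e Finset.univ.val = Multiset.map d Finset.univ.val) :
    ∃ σ : Equiv.Perm (Fin n), e ∘ σ = d := by
  refine ⟨(sort d).symm.trans (sort e), ?_⟩
  simpa [Function.comp_assoc] using
    congrArg (· ∘ (sort d).symm) (comp_sort_eq_of_map_univ_eq h)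

open Polynomial in
theorem Matrix.IsHermitian.exists_perm_eigenvalues_comp_eq {𝕜 : Type*} [RCLike 𝕜] {n : ℕ}
    {A V : Matrix (Fin n) (Fin n) 𝕜} (hA : A.IsHermitian) (hV : V ∈ unitaryGroup (Fin n) 𝕜)
    (d : Fin n → ℝ) (h : A = Vᴴ * diagonal ((RCLike.ofReal : ℝ → 𝕜) ∘ d) * V) :
    ∃ σ : Equiv.Perm (Fin n), hA.eigenvalues ∘ σ = d := by
  have hroots : Multiset.map ((RCLike.ofReal : ℝ → 𝕜) ∘ hA.eigenvalues) Finset.univ.val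
      = Multiset.map (RCLike.ofReal ∘ d) Finset.univ.val := by
    rw [← hA.roots_charpoly_eq_eigenvalues, h,
      charpoly_conjTranspose_mul_mul_of_mem_unitaryGroup hV, charpoly_diagonal, roots_prod]
    · simp
    · simp [Finset.prod_ne_zero_iff, X_sub_C_ne_zero]
  rw [← Multiset.map_map, ← Multiset.map_map] at hroots
  exact Tuple.exists_perm_comp_eq_of_map_univ_eq
    (Multiset.map_injective RCLike.ofReal_injective hroots)

theorem Matrix.conjTranspose_mul_self_mul_mul_of_mem_unitaryGroup {n R : Type*} [Fintype n]
    [DecidableEq n] [CommRing R] [StarRing R] {U : Matrix n n R} (hU : U ∈ unitaryGroup n R)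
    (A W : Matrix n n R) : (U * A * W)ᴴ * (U * A * W) = Wᴴ * (Aᴴ * A) * W := by
  have hUU : Uᴴ * U = 1 := mem_unitaryGroup_iff'.mp hU
  simp only [conjTranspose_mul, mul_assoc]
  rw [← mul_assoc Uᴴ U, hUU, one_mul]

theorem lrBlock_diagBlock_mul_mul_diagBlock {m q : ℕ}
    (u₁ u₂ : Matrix (Fin m ⊕ Fin q) (Fin m ⊕ Fin q) ℂ) (v₁ v₂ : Matrix (Fin q) (Fin q) ℂ) (g : Matrix (bidx m q) (bidx m q) ℂ) :
    lrBlock m q (diagBlock m q u₁ v₁ * g * diagBlock m q u₂ v₂) = v₁ * lrBlock m q g * v₂ := by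
  change (diagBlock m q u₁ v₁ * g * diagBlock m q u₂ v₂).toBlocks₂₂ = v₁ * g.toBlocks₂₂ * v₂
  rw [← fromBlocks_toBlocks g, diagBlock, diagBlock, fromBlocks_multiply, fromBlocks_multiply]
  simp

theorem lrBlock_bMat (m q : ℕ) (t : Fin q → ℝ) (z : ℂ) :
    lrBlock m q (bMat m q t z) = hMat q z * cosMat q t := by
  ext i j
  simp [lrBlock, bMat]

theorem hMat_mul_cosMat (q : ℕ) (t : Fin q → ℝ) (z : ℂ) :
    hMat q z * cosMat q t = diagonal fun j => (if j.val = 0 then z else 1) * (Real.cos (t j) : ℂ) :=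
  diagonal_mul_diagonal _ _

theorem conjTranspose_mul_self_hMat_mul_cosMat {q : ℕ} (t : Fin q → ℝ) {z : ℂ} (hz : ‖z‖ = 1) :
    (hMat q z * cosMat q t)ᴴ * (hMat q z * cosMat q t)
      = diagonal fun j => ((Real.cos (t j) ^ 2 : ℝ) : ℂ) := by
  rw [hMat_mul_cosMat, diagonal_conjTranspose, diagonal_mul_diagonal]
  congr 1
  ext j
  have hw : ‖(if j.val = 0 then z else 1)‖ = 1 := by split_ifs <;> simp [hz]
  rw [Pi.star_apply, Complex.star_def, Complex.conj_mul', norm_mul, hw, one_mul, Complex.norm_real,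
    Real.norm_eq_abs, ← Complex.ofReal_pow, sq_abs]

theorem det_hMat {q : ℕ} (hq : 1 ≤ q) (z : ℂ) : (hMat q z).det = z := by
  rw [hMat, det_diagonal, Finset.prod_eq_single_of_mem ⟨0, hq⟩ (Finset.mem_univ _)]
  · simp
  · intro j _ hj
    simp [Fin.ext_iff.not.mp hj]

namespace Aq

variable {q : ℕ} {t : Fin q → ℝ}

theorem cos_nonneg (ht : t ∈ Aq q) (j : Fin q) : 0 ≤ Real.cos (t j) :=
  Real.cos_nonneg_of_mem_Icc ⟨by linarith [(ht.1 j).1, Real.pi_pos], (ht.1 j).2⟩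

theorem monotone_cos_sq (ht : t ∈ Aq q) : Monotone fun j => Real.cos (t j) ^ 2 := fun i j hij =>
  pow_le_pow_left₀ (cos_nonneg ht i) (Real.cos_le_cos_of_nonneg_of_le_pi (ht.1 j).1
    (by linarith [(ht.1 i).2, Real.pi_pos]) (ht.2 i j hij)) 2

theorem cos_pos (ht : t ∈ Aq q) (hq : 1 ≤ q) (h0 : t ⟨0, hq⟩ < Real.pi / 2) (j : Fin q) :
    0 < Real.cos (t j) :=
  Real.cos_pos_of_mem_Ioo ⟨by linarith [(ht.1 j).1, Real.pi_pos],
    (ht.2 _ j (Nat.zero_le j.val)).trans_lt h0⟩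

end Aq

theorem doubleCoset_data_general (m q : ℕ) (hq : 1 ≤ q)
    (t : Fin q → ℝ) (ht : t ∈ Aq q) (z : ℂ) (hz : ‖z‖ = 1)
    (u₁ u₂ : Matrix (Fin m ⊕ Fin q) (Fin m ⊕ Fin q) ℂ)
    (v₁ v₂ : Matrix (Fin q) (Fin q) ℂ)
    (hv₁ : v₁ ∈ Matrix.specialUnitaryGroup (Fin q) ℂ)
    (hv₂ : v₂ ∈ Matrix.specialUnitaryGroup (Fin q) ℂ)
    (g : Matrix (bidx m q) (bidx m q) ℂ)
    (hg : g = diagBlock m q u₁ v₁ * bMat m q t z * diagBlock m q u₂ v₂) :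
    (∃ σ : Equiv.Perm (Fin q), ∀ j,
        (Matrix.isHermitian_conjTranspose_mul_self (lrBlock m q g)).eigenvalues (σ j)
          = Real.cos (t j) ^ 2) ∧
    (∀ j, sigUp (lrBlock m q g) j = Real.cos (t j)) ∧
    (lrBlock m q g).det = z * ∏ j, (Real.cos (t j) : ℂ) ∧
    (t ⟨0, hq⟩ < Real.pi / 2 →
      z = (lrBlock m q g).det / ((‖(lrBlock m q g).det‖ : ℝ) : ℂ)) := by
  obtain ⟨hv₁u, hv₁d⟩ := mem_specialUnitaryGroup_iff.mp hv₁
  obtain ⟨hv₂u, hv₂d⟩ := mem_specialUnitaryGroup_iff.mp hv₂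
  have hD : lrBlock m q g = v₁ * (hMat q z * cosMat q t) * v₂ := by
    rw [hg, lrBlock_diagBlock_mul_mul_diagBlock, lrBlock_bMat]
  set hA := isHermitian_conjTranspose_mul_self (lrBlock m q g)
  obtain ⟨σ, hσ⟩ := hA.exists_perm_eigenvalues_comp_eq hv₂u (fun j => Real.cos (t j) ^ 2) (by
    rw [hD, conjTranspose_mul_self_mul_mul_of_mem_unitaryGroup hv₁u,
      conjTranspose_mul_self_hMat_mul_cosMat t hz]
    rfl)
  have hsorted : hA.eigenvalues ∘ Tuple.sort hA.eigenvalues = fun j => Real.cos (t j) ^ 2 := by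
    rw [← Tuple.comp_perm_comp_sort_eq_comp_sort (σ := σ), hσ,
      Tuple.sort_eq_refl_iff_monotone.mpr (Aq.monotone_cos_sq ht)]
    rfl
  have hdet : (lrBlock m q g).det = z * ∏ j, (Real.cos (t j) : ℂ) := by
    rw [hD, det_mul, det_mul, det_mul, hv₁d, hv₂d, det_hMat hq, cosMat, det_diagonal, one_mul,
      mul_one]
  refine ⟨⟨σ, congrFun hσ⟩, fun j => ?_, hdet, fun h0 => ?_⟩
  · exact (congrArg Real.sqrt (congrFun hsorted j)).trans (Real.sqrt_sq (Aq.cos_nonneg ht j))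
  · have hP : 0 < ∏ j, Real.cos (t j) := Finset.prod_pos fun j _ => Aq.cos_pos ht hq h0 j
    rw [hdet, ← Complex.ofReal_prod, norm_mul, hz, one_mul, Complex.norm_real,
      Real.norm_of_nonneg hP.le, mul_div_cancel_right₀ _ (Complex.ofReal_ne_zero.mpr hP.ne')]

/-- **Recovering the double coset data from `g`.** If `g = k₁ · b_{t,z} · k₂` with
`k₁, k₂ ∈ K₁ = SU(p) × SU(q)`, then the eigenvalues of `D(g)ᴴ D(g)`, counted with
multiplicity, are `cos² t₁, …, cos² t_q` (equivalently, the increasingly ordered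
singular values of `D(g)` are `cos t₁ ≤ … ≤ cos t_q`), `det D(g) = z · ∏ⱼ cos tⱼ`,
and if `t₁ < π/2` then `z = det D(g) / |det D(g)|`. -/
theorem doubleCoset_data (m q : ℕ) (hm : 1 ≤ m) (hq : 1 ≤ q)
    (t : Fin q → ℝ) (ht : t ∈ Aq q) (z : ℂ) (hz : ‖z‖ = 1)
    (u₁ u₂ : Matrix (Fin m ⊕ Fin q) (Fin m ⊕ Fin q) ℂ)
    (v₁ v₂ : Matrix (Fin q) (Fin q) ℂ)
    (hu₁ : u₁ ∈ Matrix.specialUnitaryGroup (Fin m ⊕ Fin q) ℂ)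
    (hu₂ : u₂ ∈ Matrix.specialUnitaryGroup (Fin m ⊕ Fin q) ℂ)
    (hv₁ : v₁ ∈ Matrix.specialUnitaryGroup (Fin q) ℂ)
    (hv₂ : v₂ ∈ Matrix.specialUnitaryGroup (Fin q) ℂ)
    (g : Matrix (bidx m q) (bidx m q) ℂ)
    (hg : g = diagBlock m q u₁ v₁ * bMat m q t z * diagBlock m q u₂ v₂) :
    (∃ σ : Equiv.Perm (Fin q), ∀ j,
        (Matrix.isHermitian_conjTranspose_mul_self (lrBlock m q g)).eigenvalues (σ j)
          = Real.cos (t j) ^ 2) ∧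
    (∀ j, sigUp (lrBlock m q g) j = Real.cos (t j)) ∧
    (lrBlock m q g).det = z * ∏ j, (Real.cos (t j) : ℂ) ∧
    (t ⟨0, hq⟩ < Real.pi / 2 →
      z = (lrBlock m q g).det / ((‖(lrBlock m q g).det‖ : ℝ) : ℂ)) :=
  doubleCoset_data_general m q hq t ht z hz u₁ u₂ v₁ v₂ hv₁ hv₂ g hg

end
end

section
/- Phase factorization of χ_l-coinvariant functions: Let p > q ≥ 1 be integers and l ∈ ℤ. Let G = SU(p+q), K := {diag(u,v) : u ∈ U(p), v ∈ U(q), det u · det v = 1}, and χ : K → 𝕋, χ(diag(u,v)) := det u. Suppose φ : G → ℂ satisfies φ(k_1 g k_2) = χ(k_1)^{−l}·χ(k_2)^{−l}·φ(g) for all k_1, k_2 ∈ K and g ∈ G. Then for all t ∈ A_q and z ∈ 𝕋: φ(b_{t,z}) = z^l · φ(a_t). -/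
/-!
Conjugating `a_t` by the diagonal unitaries `k₁ = diag(h(z⁻¹), 1, h(z))` and
`k₂ = diag(h(z), h(z⁻¹), 1)` (blocks of sizes `p - q`, `q`, `q`) gives `b_{t,z}`. Both lie
in `K`, with `χ(k₁) = z⁻¹` and `χ(k₂) = 1`: the phases in the first block cancel through the
identity block of `a_t` and only serve to make `det u · det v = 1`. Finally `a_t ∈ SU(p+q)`,
since after pairing the middle and last blocks coordinatewise it is block diagonal with `2 × 2`
rotations. Coinvariance then yields `φ(b_{t,z}) = z^l φ(a_t)`.
-/

noncomputable section
open Matrix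

/-- the subgroup `K = S(U(p) × U(q)) = {diag(u,v) : det u · det v = 1}`. -/
def Kset (m q : ℕ) : Set (Matrix (bidx m q) (bidx m q) ℂ) :=
  {k | ∃ u ∈ Matrix.unitaryGroup (Fin m ⊕ Fin q) ℂ,
        ∃ v ∈ Matrix.unitaryGroup (Fin q) ℂ,
          u.det * v.det = 1 ∧ k = Matrix.fromBlocks u 0 0 v}

/-- `χ(diag(u,v)) = det u`, expressed as the determinant of the upper-left
`p×p` block. -/
def chiK (m q : ℕ) (k : Matrix (bidx m q) (bidx m q) ℂ) : ℂ :=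
  (Matrix.of fun i j : Fin m ⊕ Fin q => k (Sum.inl i) (Sum.inl j)).det

namespace Matrix

section SpecialUnitary

variable {n o α : Type*} [Fintype n] [DecidableEq n] [Fintype o] [DecidableEq o]
  [CommRing α] [StarRing α]

lemma diagonal_mem_unitaryGroup_of_norm_eq_one {d : n → ℂ} (hd : ∀ i, ‖d i‖ = 1) :
    diagonal d ∈ unitaryGroup n ℂ := by
  rw [mem_unitaryGroup_iff, star_eq_conjTranspose, diagonal_conjTranspose,
    diagonal_mul_diagonal, ← diagonal_one]
  congr 1
  funext i
  simp [Complex.mul_conj, Complex.normSq_eq_norm_sq, hd i]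

lemma fromBlocks_mem_specialUnitaryGroup {A : Matrix n n α} {B : Matrix o o α}
    (hA : A ∈ specialUnitaryGroup n α) (hB : B ∈ specialUnitaryGroup o α) :
    fromBlocks A 0 0 B ∈ specialUnitaryGroup (n ⊕ o) α := by
  rw [mem_specialUnitaryGroup_iff] at hA hB ⊢
  refine ⟨?_, by rw [det_fromBlocks_zero₂₁, hA.2, hB.2, one_mul]⟩
  rw [mem_unitaryGroup_iff'] at hA hB ⊢
  rw [star_eq_conjTranspose, fromBlocks_conjTranspose, fromBlocks_multiply,
    ← star_eq_conjTranspose, ← star_eq_conjTranspose, hA.1, hB.1]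
  simp

lemma blockDiagonal_mem_specialUnitaryGroup {M : o → Matrix n n α}
    (hM : ∀ i, M i ∈ specialUnitaryGroup n α) :
    blockDiagonal M ∈ specialUnitaryGroup (n × o) α := by
  simp only [mem_specialUnitaryGroup_iff, mem_unitaryGroup_iff'] at hM ⊢
  refine ⟨?_, by rw [det_blockDiagonal]; exact Finset.prod_eq_one fun i _ => (hM i).2⟩
  rw [star_eq_conjTranspose, blockDiagonal_conjTranspose, ← blockDiagonal_mul]
  simp only [← star_eq_conjTranspose, fun i => (hM i).1]
  exact blockDiagonal_one

lemma submatrix_equiv_mem_specialUnitaryGroup {A : Matrix o o α}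
    (hA : A ∈ specialUnitaryGroup o α) (e : n ≃ o) :
    A.submatrix e e ∈ specialUnitaryGroup n α := by
  rw [mem_specialUnitaryGroup_iff, mem_unitaryGroup_iff'] at hA ⊢
  refine ⟨?_, by rw [det_submatrix_equiv_self, hA.2]⟩
  rw [star_eq_conjTranspose, conjTranspose_submatrix, submatrix_mul_equiv,
    ← star_eq_conjTranspose, hA.1, submatrix_one_equiv]

end SpecialUnitary

end Matrix

def planeRotation (θ : ℝ) : Matrix (Fin 2) (Fin 2) ℂ :=
  !![(Real.cos θ : ℂ), -(Real.sin θ : ℂ); (Real.sin θ : ℂ), (Real.cos θ : ℂ)]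

lemma planeRotation_mem_specialUnitaryGroup (θ : ℝ) :
    planeRotation θ ∈ specialUnitaryGroup (Fin 2) ℂ := by
  have h := Real.cos_sq_add_sin_sq θ
  rw [mem_specialUnitaryGroup_iff, mem_unitaryGroup_iff', planeRotation]
  generalize Real.cos θ = c at h ⊢
  generalize Real.sin θ = s at h ⊢
  have hc : (c : ℂ) * c + s * s = 1 := by
    exact_mod_cast (by linear_combination h : c * c + s * s = 1)
  refine ⟨?_, by rw [det_fin_two_of]; linear_combination hc⟩
  ext i k
  fin_cases i <;> fin_cases k <;>
    simp [mul_apply, Fin.sum_univ_two, one_apply, Complex.conj_ofReal] <;>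
    first | ring1 | linear_combination hc

def bidxEquiv (m q : ℕ) : bidx m q ≃ Fin m ⊕ Fin 2 × Fin q where
  toFun
    | .inl (.inl i) => .inl i
    | .inl (.inr j) => .inr (0, j)
    | .inr j => .inr (1, j)
  invFun
    | .inl i => .inl (.inl i)
    | .inr (i, j) => if i = 0 then .inl (.inr j) else .inr j
  left_inv := by rintro ((i | j) | j) <;> simp
  right_inv := by
    rintro (i | ⟨i, j⟩)
    · rfl
    · fin_cases i <;> simp

lemma bMat_one_eq_submatrix (m q : ℕ) (t : Fin q → ℝ) :
    bMat m q t 1 = (fromBlocks 1 0 0 (blockDiagonal fun j => planeRotation (t j))).submatrix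
      (bidxEquiv m q) (bidxEquiv m q) := by
  ext i j
  rcases i with (i | i) | i <;> rcases j with (j | j) | j <;>
    simp [bMat, bidxEquiv, hMat, cosMat, sinMat, planeRotation, blockDiagonal_apply,
      diagonal_apply, one_apply]

lemma bMat_one_mem_specialUnitaryGroup (m q : ℕ) (t : Fin q → ℝ) :
    bMat m q t 1 ∈ specialUnitaryGroup (bidx m q) ℂ := by
  rw [bMat_one_eq_submatrix]
  exact submatrix_equiv_mem_specialUnitaryGroup (fromBlocks_mem_specialUnitaryGroup
    (one_mem _) (blockDiagonal_mem_specialUnitaryGroup fun j =>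
      planeRotation_mem_specialUnitaryGroup (t j))) _

def firstPhase (n : ℕ) (w : ℂ) : Fin n → ℂ := fun i => if i.val = 0 then w else 1

section FirstPhase

variable {n : ℕ} {w : ℂ}

lemma norm_firstPhase (hw : ‖w‖ = 1) (i : Fin n) : ‖firstPhase n w i‖ = 1 := by
  unfold firstPhase
  split_ifs <;> simp [hw]

lemma prod_firstPhase [NeZero n] (w : ℂ) : ∏ i, firstPhase n w i = w := by
  rw [Fintype.prod_eq_single 0 fun i hi => by simp [firstPhase, Fin.val_ne_zero_iff.mpr hi]]
  simp [firstPhase]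

@[simp]
lemma firstPhase_one : firstPhase n 1 = 1 := by
  funext i
  simp [firstPhase]

lemma firstPhase_inv_mul (hw : w ≠ 0) (i : Fin n) :
    firstPhase n w⁻¹ i * firstPhase n w i = 1 := by
  unfold firstPhase
  split_ifs <;> simp [hw]

lemma firstPhase_mul_inv (hw : w ≠ 0) (i : Fin n) :
    firstPhase n w i * firstPhase n w⁻¹ i = 1 := by
  unfold firstPhase
  split_ifs <;> simp [hw]

end FirstPhase

def leftPhase (m q : ℕ) (z : ℂ) : Matrix (bidx m q) (bidx m q) ℂ :=
  diagonal (Sum.elim (Sum.elim (firstPhase m z⁻¹) 1) (firstPhase q z))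

def rightPhase (m q : ℕ) (z : ℂ) : Matrix (bidx m q) (bidx m q) ℂ :=
  diagonal (Sum.elim (Sum.elim (firstPhase m z) (firstPhase q z⁻¹)) 1)

lemma bMat_eq_leftPhase_mul_mul_rightPhase (m q : ℕ) (t : Fin q → ℝ) {z : ℂ}
    (hz : z ≠ 0) :
    bMat m q t z = leftPhase m q z * bMat m q t 1 * rightPhase m q z := by
  have hMat_eq (w : ℂ) : hMat q w = diagonal (firstPhase q w) := rfl
  ext i j
  rw [leftPhase, rightPhase, mul_diagonal, diagonal_mul]
  rcases i with (i | i) | i <;> rcases j with (j | j) | j <;>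
    simp [bMat, hMat_eq, cosMat, sinMat, diagonal_apply, one_apply]
  all_goals
    refine ite_congr rfl (fun hij => ?_) fun _ => rfl
    subst hij
  · exact (firstPhase_inv_mul hz i).symm
  · exact mul_comm _ _
  · rw [mul_right_comm, firstPhase_mul_inv hz, one_mul]

lemma diagonal_mem_Kset {m q : ℕ} {f : Fin m ⊕ Fin q → ℂ} {g : Fin q → ℂ}
    (hf : ∀ i, ‖f i‖ = 1) (hg : ∀ j, ‖g j‖ = 1) (hdet : (∏ i, f i) * ∏ j, g j = 1) :
    diagonal (Sum.elim f g) ∈ Kset m q :=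
  ⟨diagonal f, diagonal_mem_unitaryGroup_of_norm_eq_one hf,
    diagonal g, diagonal_mem_unitaryGroup_of_norm_eq_one hg,
    by rwa [det_diagonal, det_diagonal], (fromBlocks_diagonal f g).symm⟩

lemma chiK_diagonal (m q : ℕ) (d : bidx m q → ℂ) :
    chiK m q (diagonal d) = ∏ i, d (Sum.inl i) := by
  rw [chiK, ← det_diagonal]
  congr 1
  ext i j
  simp [diagonal_apply]

section Phases

variable {m q : ℕ} {z : ℂ}

lemma leftPhase_mem_Kset [NeZero m] [NeZero q] (hz : ‖z‖ = 1) :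
    leftPhase m q z ∈ Kset m q := by
  have hz0 : z ≠ 0 := ne_zero_of_norm_ne_zero (hz.symm ▸ one_ne_zero)
  refine diagonal_mem_Kset ?_ (norm_firstPhase hz) ?_
  · rintro (i | j)
    · exact norm_firstPhase (by rw [norm_inv, hz, inv_one]) i
    · simp
  · simp [Fintype.prod_sum_type, prod_firstPhase, hz0]

lemma rightPhase_mem_Kset [NeZero m] [NeZero q] (hz : ‖z‖ = 1) :
    rightPhase m q z ∈ Kset m q := by
  have hz0 : z ≠ 0 := ne_zero_of_norm_ne_zero (hz.symm ▸ one_ne_zero)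
  refine diagonal_mem_Kset ?_ (fun _ => by simp) ?_
  · rintro (i | j)
    · exact norm_firstPhase hz i
    · exact norm_firstPhase (by rw [norm_inv, hz, inv_one]) j
  · simp [Fintype.prod_sum_type, prod_firstPhase, hz0]

lemma chiK_leftPhase [NeZero m] : chiK m q (leftPhase m q z) = z⁻¹ := by
  simp [leftPhase, chiK_diagonal, Fintype.prod_sum_type, prod_firstPhase]

lemma chiK_rightPhase [NeZero m] [NeZero q] (hz : z ≠ 0) :
    chiK m q (rightPhase m q z) = 1 := by
  simp [rightPhase, chiK_diagonal, Fintype.prod_sum_type, prod_firstPhase, hz]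

end Phases

theorem coinvariant_phase_factorization_general (m q : ℕ) (hm : 1 ≤ m) (hq : 1 ≤ q) (l : ℤ)
    (φ : Matrix (bidx m q) (bidx m q) ℂ → ℂ)
    (hφ : ∀ k₁ ∈ Kset m q, ∀ k₂ ∈ Kset m q,
      ∀ g ∈ Matrix.specialUnitaryGroup (bidx m q) ℂ,
        φ (k₁ * g * k₂) = (chiK m q k₁) ^ (-l) * (chiK m q k₂) ^ (-l) * φ g)
    (t : Fin q → ℝ) (z : ℂ) (hz : ‖z‖ = 1) :
    φ (bMat m q t z) = z ^ l * φ (bMat m q t 1) := by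
  have : NeZero m := ⟨by omega⟩
  have : NeZero q := ⟨by omega⟩
  have hz0 : z ≠ 0 := ne_zero_of_norm_ne_zero (hz.symm ▸ one_ne_zero)
  rw [bMat_eq_leftPhase_mul_mul_rightPhase m q t hz0,
    hφ _ (leftPhase_mem_Kset hz) _ (rightPhase_mem_Kset hz) _
      (bMat_one_mem_specialUnitaryGroup m q t),
    chiK_leftPhase, chiK_rightPhase hz0]
  simp [_root_.zpow_neg]

/-- **Phase factorization of `χ_l`-coinvariant functions.** If
`φ(k₁ g k₂) = χ(k₁)^{−l} χ(k₂)^{−l} φ(g)` for all `k₁, k₂ ∈ K` and `g ∈ SU(p+q)`,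
then `φ(b_{t,z}) = z^l · φ(a_t)` for all `t ∈ A_q`, `z ∈ 𝕋`, where `a_t = b_{t,1}`. -/
theorem coinvariant_phase_factorization (m q : ℕ) (hm : 1 ≤ m) (hq : 1 ≤ q) (l : ℤ)
    (φ : Matrix (bidx m q) (bidx m q) ℂ → ℂ)
    (hφ : ∀ k₁ ∈ Kset m q, ∀ k₂ ∈ Kset m q,
      ∀ g ∈ Matrix.specialUnitaryGroup (bidx m q) ℂ,
        φ (k₁ * g * k₂) = (chiK m q k₁) ^ (-l) * (chiK m q k₂) ^ (-l) * φ g)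
    (t : Fin q → ℝ) (ht : t ∈ Aq q) (z : ℂ) (hz : ‖z‖ = 1) :
    φ (bMat m q t z) = z ^ l * φ (bMat m q t 1) :=
  coinvariant_phase_factorization_general m q hm hq l φ hφ t z hz

end
end
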